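/- arXiv:1812.02469 — 3 statements merged into one kernel-verified Lean document; each statement's English description precedes it below -/
import Mathlib

section
/- Let (κ_e) be nonnegative edge capacities on a locally finite rooted tree. Then MaxFlow(0→∞, ⟨κ_e⟩) > 0 if and only if MaxFlow(0→∞, ⟨min(κ_e,1)⟩) > 0. -/
/-! A flow is bounded by its strength on every edge, so scaling a flow of strength `s > 0`
by `min 1 (c / s)` keeps it below both `κ` and `c` while its strength stays positive. -/

open scoped ENNReal NNReal Classical

/-- A locally finite rooted tree, encoded by a parent function: every vertex eventually
reaches the root by iterating `parent`, and every vertex has finitely many children.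
Non-root vertices are identified with the edge joining them to their parent. -/
structure GrowingTree where
  V : Type
  root : V
  parent : V → V
  parent_root : parent root = root
  reaches_root : ∀ v, ∃ n, parent^[n] v = root
  locallyFinite : ∀ v, {w | parent w = v ∧ w ≠ root}.Finite

namespace GrowingTree

variable (T : GrowingTree)

/-- The children of a vertex. -/
noncomputable def children (v : T.V) : Finset T.V := (T.locallyFinite v).toFinset

/-- The depth (distance from the root) of a vertex. -/
noncomputable def depth (v : T.V) : ℕ := Nat.find (T.reaches_root v)

/-- A flow from the root to infinity: at every vertex the value (the flow through the
edge above the vertex, resp. the strength at the root) equals the total flow to the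
children. -/
def IsFlow (θ : T.V → ℝ≥0) : Prop :=
  ∀ v, θ v = ∑ w ∈ T.children v, θ w

/-- The strength of a flow: the total outflow from the root. -/
def strength (θ : T.V → ℝ≥0) : ℝ≥0 := θ T.root

/-- A flow respects the capacities `κ` if it is bounded by `κ` on every edge
(i.e. at every non-root vertex). -/
def Respects (θ : T.V → ℝ≥0) (κ : T.V → ℝ≥0) : Prop :=
  ∀ v, v ≠ T.root → θ v ≤ κ v

/-- The maximal flow from the root to infinity with respect to capacities `κ`. -/
noncomputable def maxFlow (κ : T.V → ℝ≥0) : ℝ≥0∞ :=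
  ⨆ θ : {θ : T.V → ℝ≥0 // T.IsFlow θ ∧ T.Respects θ κ}, (T.strength θ.1 : ℝ≥0∞)

/-- An infinite self-avoiding path starting at the root. -/
def IsRay (r : ℕ → T.V) : Prop :=
  r 0 = T.root ∧ ∀ n, T.parent (r (n + 1)) = r n ∧ r (n + 1) ≠ T.root

/-- A cutset separating the root from infinity: a set of edges (non-root vertices) met by
every infinite self-avoiding path starting at the root. -/
def IsCutset (C : Set T.V) : Prop :=
  T.root ∉ C ∧ ∀ r : ℕ → T.V, T.IsRay r → ∃ n, r (n + 1) ∈ C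

/-- The total capacity of a cutset. -/
noncomputable def cutsetSum (κ : T.V → ℝ≥0) (C : Set T.V) : ℝ≥0∞ :=
  ∑' v : C, (κ v.1 : ℝ≥0∞)

/-- The minimum of the capacities along the path from the root to an edge (inclusive). -/
noncomputable def minCap (κ : T.V → ℝ≥0) (v : T.V) : ℝ≥0 :=
  if h : v = T.root then κ v
  else
    (Finset.range (T.depth v)).inf'
      (by
        rw [Finset.nonempty_range_iff]
        intro h0
        apply h
        have hs : T.parent^[T.depth v] v = T.root := Nat.find_spec (T.reaches_root v)
        rw [h0] at hs
        simpa using hs)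
      (fun k => κ (T.parent^[k] v))

/-- The energy of a flow. -/
noncomputable def energy (θ : T.V → ℝ≥0) : ℝ≥0∞ :=
  ∑' v : {v : T.V // v ≠ T.root}, ((θ v.1 : ℝ≥0∞)) ^ 2

end GrowingTree

namespace GrowingTree

variable {T : GrowingTree} {θ : T.V → ℝ≥0}

theorem mem_children_parent {v : T.V} (hv : v ≠ T.root) : v ∈ T.children (T.parent v) := by
  simpa [children] using hv

theorem IsFlow.le_parent (hθ : T.IsFlow θ) (v : T.V) : θ v ≤ θ (T.parent v) := by
  by_cases hv : v = T.root
  · rw [hv, T.parent_root]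
  · rw [hθ (T.parent v)]
    exact Finset.single_le_sum (fun _ _ => zero_le) (mem_children_parent hv)

theorem IsFlow.le_iterate_parent (hθ : T.IsFlow θ) (n : ℕ) (v : T.V) :
    θ v ≤ θ (T.parent^[n] v) := by
  induction n with
  | zero => rfl
  | succ n ih => exact ih.trans (by rw [Function.iterate_succ_apply']; exact hθ.le_parent _)

theorem IsFlow.le_strength (hθ : T.IsFlow θ) (v : T.V) : θ v ≤ T.strength θ := by
  obtain ⟨n, hn⟩ := T.reaches_root v
  simpa [hn, strength] using hθ.le_iterate_parent n v

theorem IsFlow.const_mul (hθ : T.IsFlow θ) (c : ℝ≥0) : T.IsFlow (fun v => c * θ v) := by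
  intro v
  simp only [← Finset.mul_sum, ← hθ v]

theorem Respects.mono {κ κ' : T.V → ℝ≥0} (hθ : T.Respects θ κ) (hκ : κ ≤ κ') :
    T.Respects θ κ' :=
  fun v hv => (hθ v hv).trans (hκ v)

theorem maxFlow_mono {κ κ' : T.V → ℝ≥0} (hκ : κ ≤ κ') : T.maxFlow κ ≤ T.maxFlow κ' :=
  iSup_le fun θ => le_iSup_of_le ⟨θ.1, θ.2.1, θ.2.2.mono hκ⟩ le_rfl

theorem maxFlow_pos_iff {κ : T.V → ℝ≥0} :
    0 < T.maxFlow κ ↔ ∃ θ, T.IsFlow θ ∧ T.Respects θ κ ∧ 0 < T.strength θ := by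
  simp [maxFlow, lt_iSup_iff, and_assoc]

theorem maxFlow_pos_iff_min_pos {κ : T.V → ℝ≥0} {c : ℝ≥0} (hc : 0 < c) :
    0 < T.maxFlow κ ↔ 0 < T.maxFlow (fun v => min (κ v) c) := by
  refine ⟨fun h => ?_, fun h => h.trans_le (maxFlow_mono fun v => min_le_left _ _)⟩
  obtain ⟨θ, hflow, hresp, hs⟩ := maxFlow_pos_iff.mp h
  set t := min 1 (c / T.strength θ)
  have ht : 0 < t := lt_min one_pos (div_pos hc hs)
  refine maxFlow_pos_iff.mpr ⟨_, hflow.const_mul t, fun v hv => le_min ?_ ?_, mul_pos ht hs⟩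
  · exact (mul_le_of_le_one_left zero_le (min_le_left _ _)).trans (hresp v hv)
  · calc t * θ v ≤ c / T.strength θ * T.strength θ :=
          mul_le_mul' (min_le_right _ _) (hflow.le_strength v)
      _ = c := div_mul_cancel₀ c hs.ne'

end GrowingTree

/-- The maximal flow is positive iff the maximal flow for the capacities truncated at `1`
is positive. -/
theorem maxFlow_pos_iff_truncated (T : GrowingTree) (κ : T.V → ℝ≥0) :
    0 < T.maxFlow κ ↔ 0 < T.maxFlow (fun v => min (κ v) 1) :=
  GrowingTree.maxFlow_pos_iff_min_pos one_pos
end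

section
/- Let G be a finite directed graph (or rooted tree with edges oriented away from the root 0), Z a set of vertices, and θ a flow from 0 to Z. Then there exists a finite nonnegative measure μ on the set of self-avoiding paths from 0 to Z such that for every edge e, the total μ-mass of paths containing e equals θ(e). -/
open scoped ENNReal NNReal Classical

section Aux
variable (T : GrowingTree)

lemma GT_iter_root (n : ℕ) : T.parent^[n] T.root = T.root :=
  Function.iterate_fixed T.parent_root n

lemma GT_depth_parent {u : T.V} (hu : u ≠ T.root) :
    T.depth u = T.depth (T.parent u) + 1 := by
  have h1 : T.parent^[T.depth (T.parent u) + 1] u = T.root := by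
    rw [Function.iterate_succ_apply]
    exact Nat.find_spec (T.reaches_root (T.parent u))
  have hle : T.depth u ≤ T.depth (T.parent u) + 1 := Nat.find_le h1
  have hpos : T.depth u ≠ 0 := by
    intro h0
    have := Nat.find_spec (T.reaches_root u)
    rw [GrowingTree.depth] at h0
    rw [h0] at this
    exact hu this
  obtain ⟨k, hk⟩ := Nat.exists_eq_succ_of_ne_zero hpos
  have h2 : T.parent^[k] (T.parent u) = T.root := by
    rw [← Function.iterate_succ_apply, ← hk]
    exact Nat.find_spec (T.reaches_root u)
  have : T.depth (T.parent u) ≤ k := Nat.find_le h2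
  omega

lemma GT_depth_iterate {v : T.V} (hv : v ≠ T.root) :
    ∀ k (z : T.V), T.parent^[k] z = v → T.depth z = T.depth v + k := by
  intro k
  induction k with
  | zero => intro z h; simp at h; simp [h]
  | succ k ih =>
    intro z h
    rw [Function.iterate_succ_apply] at h
    have hz : z ≠ T.root := by
      intro h0; rw [h0] at h
      rw [show T.parent T.root = T.root from T.parent_root, GT_iter_root] at h
      exact hv h.symm
    rw [GT_depth_parent T hz, ih (T.parent z) h]
    omega

lemma GT_mem_children {v w : T.V} : w ∈ T.children v ↔ T.parent w = v ∧ w ≠ T.root := by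
  simp [GrowingTree.children, Set.Finite.mem_toFinset]

end Aux


/-- Path decomposition of flows on a finite rooted tree: a flow `θ` from the root to a set
`Z` of vertices can be written as a nonnegative measure `μ` on the self-avoiding paths
from the root to `Z` (in a tree such a path is determined by its endpoint `z ∈ Z`) such
that, for every edge `e`, the total `μ`-mass of the paths containing `e` equals `θ(e)`. -/
theorem flow_path_decomposition (T : GrowingTree) [Finite T.V]
    (Z : Set T.V) (θ : T.V → ℝ≥0)
    (hcons : ∀ v, v ≠ T.root → v ∉ Z → θ v = ∑ w ∈ T.children v, θ w)
    (habs : ∀ v ∈ Z, ∑ w ∈ T.children v, θ w ≤ θ v) :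
    ∃ μ : T.V → ℝ≥0, (∀ z, z ∉ Z → μ z = 0) ∧
      ∀ v : T.V, v ≠ T.root →
        θ v = ∑' z : {z : T.V // z ∈ Z ∧ ∃ n, T.parent^[n] z = v}, μ z.1 := by
  classical
  haveI : Fintype T.V := Fintype.ofFinite T.V
  set μ : T.V → ℝ≥0 := fun z => if z ∈ Z then θ z - ∑ w ∈ T.children z, θ w else 0 with hμ
  set S : T.V → Finset T.V :=
    fun v => Finset.univ.filter (fun z => z ∈ Z ∧ ∃ n, T.parent^[n] z = v) with hS
  have memS : ∀ v z, z ∈ S v ↔ z ∈ Z ∧ ∃ n, T.parent^[n] z = v := by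
    intro v z; simp [hS]
  have hchild_depth : ∀ v w, v ≠ T.root → w ∈ T.children v → T.depth w = T.depth v + 1 := by
    intro v w hv hw
    rw [GT_mem_children] at hw
    rw [GT_depth_parent T hw.2, hw.1]
  have hdepth_mem : ∀ v, v ≠ T.root → ∀ z ∈ S v, ∃ k, T.depth z = T.depth v + k := by
    intro v hv z hz
    obtain ⟨_, k, hk⟩ := (memS v z).1 hz
    exact ⟨k, GT_depth_iterate T hv k z hk⟩
  -- split of S v
  have hsplit : ∀ v, v ≠ T.root →
      S v = (if v ∈ Z then ({v} : Finset T.V) else ∅) ∪ (T.children v).biUnion S := by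
    intro v hv
    ext z
    simp only [Finset.mem_union, Finset.mem_biUnion, memS]
    constructor
    · rintro ⟨hzZ, n, hn⟩
      cases n with
      | zero =>
        simp only [Function.iterate_zero, id_eq] at hn
        left; subst hn; rw [if_pos hzZ]; exact Finset.mem_singleton_self z
      | succ n =>
        right
        rw [Function.iterate_succ_apply'] at hn
        refine ⟨T.parent^[n] z, ?_, hzZ, n, rfl⟩
        rw [GT_mem_children]
        refine ⟨hn, ?_⟩
        intro h0; rw [h0] at hn
        rw [T.parent_root] at hn
        exact hv hn.symm
    · rintro (h | ⟨w, hw, hzZ, n, hn⟩)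
      · split at h
        · simp at h; subst h; exact ⟨‹_›, 0, rfl⟩
        · simp at h
      · refine ⟨hzZ, n + 1, ?_⟩
        rw [Function.iterate_succ_apply', hn, (GT_mem_children T).1 hw |>.1]
  -- disjointness
  have hdisj1 : ∀ v, v ≠ T.root →
      Disjoint (if v ∈ Z then ({v} : Finset T.V) else ∅) ((T.children v).biUnion S) := by
    intro v hv
    rw [Finset.disjoint_left]
    intro z hz hz2
    have hzv : z = v := by
      by_cases hvZ : v ∈ Z
      · rw [if_pos hvZ] at hz; simpa using hz
      · rw [if_neg hvZ] at hz; simp at hz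
    obtain ⟨w, hw, hzS⟩ := Finset.mem_biUnion.1 hz2
    have hwr : w ≠ T.root := ((GT_mem_children T).1 hw).2
    obtain ⟨k, hk⟩ := hdepth_mem w hwr z hzS
    have := hchild_depth v w hv hw
    subst hzv
    omega
  have hdisj2 : ∀ v, v ≠ T.root → ((T.children v : Set T.V)).Pairwise
      (fun a b => Disjoint (S a) (S b)) := by
    intro v hv w1 hw1 w2 hw2 hne
    rw [Finset.mem_coe] at hw1 hw2
    rw [Finset.disjoint_left]
    intro z hz1 hz2
    have h1r : w1 ≠ T.root := ((GT_mem_children T).1 hw1).2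
    have h2r : w2 ≠ T.root := ((GT_mem_children T).1 hw2).2
    obtain ⟨_, a, ha⟩ := (memS w1 z).1 hz1
    obtain ⟨_, b, hb⟩ := (memS w2 z).1 hz2
    have da := GT_depth_iterate T h1r a z ha
    have db := GT_depth_iterate T h2r b z hb
    have d1 := hchild_depth v w1 hv hw1
    have d2 := hchild_depth v w2 hv hw2
    have hab : a = b := by omega
    subst hab
    exact hne (ha.symm.trans hb)
  -- main induction
  set D := Finset.univ.sup T.depth with hD
  have key : ∀ n v, v ≠ T.root → D ≤ T.depth v + n → θ v = ∑ z ∈ S v, μ z := by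
    intro n
    induction n with
    | zero =>
      intro v hv hle
      have hDv : T.depth v = D := le_antisymm (Finset.le_sup (Finset.mem_univ v)) (by omega)
      have hch : T.children v = ∅ := by
        rw [Finset.eq_empty_iff_forall_notMem]
        intro w hw
        have := hchild_depth v w hv hw
        have : T.depth w ≤ D := Finset.le_sup (Finset.mem_univ w)
        omega
      rw [hsplit v hv, hch]
      simp only [Finset.biUnion_empty, Finset.union_empty]
      by_cases hvZ : v ∈ Z
      · simp only [if_pos hvZ, Finset.sum_singleton, hμ, if_pos hvZ, hch]
        simp
      · simp only [if_neg hvZ]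
        rw [hcons v hv hvZ, hch]
        simp
    | succ n ih =>
      intro v hv hle
      have hIH : ∀ w ∈ T.children v, θ w = ∑ z ∈ S w, μ z := by
        intro w hw
        have hwr : w ≠ T.root := ((GT_mem_children T).1 hw).2
        have := hchild_depth v w hv hw
        exact ih w hwr (by omega)
      rw [hsplit v hv, Finset.sum_union (hdisj1 v hv), Finset.sum_biUnion (hdisj2 v hv)]
      have : ∑ w ∈ T.children v, ∑ z ∈ S w, μ z = ∑ w ∈ T.children v, θ w :=
        Finset.sum_congr rfl (fun w hw => (hIH w hw).symm)
      rw [this]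
      by_cases hvZ : v ∈ Z
      · simp only [if_pos hvZ, Finset.sum_singleton, hμ, if_pos hvZ]
        exact (tsub_add_cancel_of_le (habs v hvZ)).symm
      · simp only [if_neg hvZ, Finset.sum_empty, zero_add]
        exact hcons v hv hvZ
  refine ⟨μ, ?_, ?_⟩
  · intro z hz; simp [hμ, hz]
  · intro v hv
    have hkey := key D v hv (Nat.le_add_left D (T.depth v))
    rw [hkey, tsum_fintype]
    exact Finset.sum_subtype (S v) (memS v) μ
end

section
/- Let T be a locally finite rooted tree and (κ_e)_{e∈E} nonnegative capacities. The enhanced Max-Flow Min-Cut theorem holds: MaxFlow(0→∞, ⟨κ_e⟩) = inf{ Σ_{e∈Π} κ_e : Π a cutset separating the root 0 from infinity }. -/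
open scoped ENNReal NNReal Classical

/-!
Weak duality: for a cutset `C`, the vertices not separated from the root by `C` form a finite
subtree (Kőnig's lemma), and the whole strength of a flow leaves this subtree through edges of `C`.

Conversely, let `c_k(v)` be the least capacity of a cut separating `v` from the `k`-th generation
below it. It decreases in `k` to some `c(v)` with `c(v) = min (κ v) (∑ c(w))`, the sum over the
children `w` of `v`. Splitting the flow at each vertex among its children in proportion to `c`
gives an admissible flow of strength `∑ c(w)` over the children of the root, and this is the limit
of the capacities of genuine cutsets.
-/

open Filter Topology

namespace GrowingTree

variable (T : GrowingTree)

lemma mem_children {v w : T.V} : w ∈ T.children v ↔ T.parent w = v ∧ w ≠ T.root := by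
  simp [children]

lemma ne_root_of_mem_children {v w : T.V} (hw : w ∈ T.children v) : w ≠ T.root :=
  ((T.mem_children).1 hw).2

lemma depth_eq_zero_iff {v : T.V} : T.depth v = 0 ↔ v = T.root := by
  simp [depth]

lemma depth_parent_lt {v : T.V} (hv : v ≠ T.root) : T.depth (T.parent v) < T.depth v := by
  have hpos : T.depth v ≠ 0 := (T.depth_eq_zero_iff).not.2 hv
  have hreach : T.parent^[T.depth v - 1] (T.parent v) = T.root := by
    rw [← Function.iterate_succ_apply, Nat.succ_eq_add_one, Nat.sub_add_cancel
      (Nat.one_le_iff_ne_zero.2 hpos)]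
    exact Nat.find_spec (T.reaches_root v)
  exact (Nat.find_min' _ hreach).trans_lt (Nat.sub_one_lt hpos)

lemma pairwiseDisjoint_children : (Set.univ : Set T.V).PairwiseDisjoint T.children := by
  intro v _ v' _ hne
  refine Finset.disjoint_left.2 fun w hw hw' => hne ?_
  rw [← ((T.mem_children).1 hw).1, ← ((T.mem_children).1 hw').1]

noncomputable def edgeBoundary (F : Finset T.V) : Finset T.V := F.biUnion T.children \ F

lemma ne_root_of_mem_edgeBoundary {F : Finset T.V} {w : T.V} (hw : w ∈ T.edgeBoundary F) :
    w ≠ T.root := by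
  obtain ⟨v, -, hwv⟩ := Finset.mem_biUnion.1 (Finset.mem_sdiff.1 hw).1
  exact T.ne_root_of_mem_children hwv

lemma strength_eq_sum_edgeBoundary {θ : T.V → ℝ≥0} (hθ : T.IsFlow θ) {F : Finset T.V}
    (hroot : T.root ∈ F) (hF : ∀ v ∈ F, T.parent v ∈ F) :
    T.strength θ = ∑ w ∈ T.edgeBoundary F, θ w := by
  have hinter : F.biUnion T.children ∩ F = F.erase T.root := by
    ext w
    simp only [Finset.mem_inter, Finset.mem_biUnion, Finset.mem_erase, T.mem_children]
    constructor
    · rintro ⟨⟨v, -, -, hw⟩, hwF⟩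
      exact ⟨hw, hwF⟩
    · rintro ⟨hw, hwF⟩
      exact ⟨⟨T.parent w, hF w hwF, rfl, hw⟩, hwF⟩
  have hsum : ∑ v ∈ F, θ v = ∑ w ∈ F.biUnion T.children, θ w := by
    rw [Finset.sum_biUnion (T.pairwiseDisjoint_children.subset (Set.subset_univ _))]
    exact Finset.sum_congr rfl fun v _ => hθ v
  rw [← Finset.add_sum_erase F θ hroot,
    ← Finset.sum_inter_add_sum_sdiff (F.biUnion T.children) F, hinter] at hsum
  exact add_right_cancel (hsum.trans (add_comm _ _))

def descendants (v : T.V) : Set T.V := {u | ∃ k, T.parent^[k] u = v}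

lemma descendants_root : T.descendants T.root = Set.univ :=
  Set.eq_univ_of_forall T.reaches_root

lemma descendants_subset (v : T.V) :
    T.descendants v ⊆ insert v (⋃ w ∈ T.children v, T.descendants w) := by
  rintro u ⟨k, hk⟩
  induction k with
  | zero => exact Or.inl hk
  | succ k ih =>
    rw [Function.iterate_succ_apply'] at hk
    by_cases hw : T.parent^[k] u = T.root
    · exact ih (by rw [hw, ← hk, hw, T.parent_root])
    · exact Or.inr (Set.mem_iUnion₂.2 ⟨_, (T.mem_children).2 ⟨hk, hw⟩, k, rfl⟩)

lemma exists_child_infinite {S : Set T.V} {v : T.V} (h : (S ∩ T.descendants v).Infinite) :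
    ∃ w ∈ T.children v, (S ∩ T.descendants w).Infinite := by
  by_contra! hfin
  refine h (((T.children v).finite_toSet.biUnion fun w hw => hfin w hw).insert v |>.subset ?_)
  rintro u ⟨huS, hu⟩
  rcases T.descendants_subset v hu with rfl | hu
  · exact Set.mem_insert _ _
  · obtain ⟨w, hw, hu⟩ := Set.mem_iUnion₂.1 hu
    exact Set.mem_insert_of_mem _ (Set.mem_iUnion₂.2 ⟨w, hw, huS, hu⟩)

lemma exists_isRay_of_infinite {S : Set T.V} (hS : S.Infinite) :
    ∃ r, T.IsRay r ∧ ∀ n, (S ∩ T.descendants (r n)).Infinite := by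
  let Big := {v : T.V // (S ∩ T.descendants v).Infinite}
  have hstep (v : Big) : ∃ w : Big, w.1 ∈ T.children v.1 := by
    obtain ⟨w, hw, hinf⟩ := T.exists_child_infinite v.2
    exact ⟨⟨w, hinf⟩, hw⟩
  choose next hnext using hstep
  have hroot : (S ∩ T.descendants T.root).Infinite := by
    rwa [T.descendants_root, Set.inter_univ]
  let r : ℕ → Big := fun n => next^[n] ⟨T.root, hroot⟩
  refine ⟨fun n => (r n).1, ⟨rfl, fun n => ?_⟩, fun n => (r n).2⟩
  simp only [r, Function.iterate_succ_apply']
  exact (T.mem_children).1 (hnext _)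

lemma cutsetSum_mono (κ : T.V → ℝ≥0) {C D : Set T.V} (h : C ⊆ D) :
    T.cutsetSum κ C ≤ T.cutsetSum κ D :=
  ENNReal.tsum_mono_subtype (fun v => (κ v : ℝ≥0∞)) h

lemma cutsetSum_coe_finset (κ : T.V → ℝ≥0) (s : Finset T.V) :
    T.cutsetSum κ s = ∑ v ∈ s, (κ v : ℝ≥0∞) :=
  Finset.tsum_subtype s (fun v => (κ v : ℝ≥0∞))

lemma cutsetSum_singleton (κ : T.V → ℝ≥0) (v : T.V) : T.cutsetSum κ {v} = κ v :=
  tsum_singleton v (fun v => (κ v : ℝ≥0∞))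

lemma cutsetSum_biUnion_le (κ : T.V → ℝ≥0) (s : Finset T.V) (t : T.V → Set T.V) :
    T.cutsetSum κ (⋃ w ∈ s, t w) ≤ ∑ w ∈ s, T.cutsetSum κ (t w) :=
  ENNReal.tsum_biUnion_le (fun v => (κ v : ℝ≥0∞)) s t

def insideCut (C : Set T.V) : Set T.V := {v | ∀ k, T.parent^[k] v ∉ C}

lemma finite_insideCut {C : Set T.V} (hC : T.IsCutset C) : (T.insideCut C).Finite := by
  by_contra hinf
  obtain ⟨r, hr, hrS⟩ := T.exists_isRay_of_infinite hinf
  obtain ⟨n, hn⟩ := hC.2 r hr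
  obtain ⟨u, hu, k, hk⟩ := (hrS (n + 1)).nonempty
  exact hu k (hk ▸ hn)

lemma edgeBoundary_insideCut_subset {C : Set T.V} (hfin : (T.insideCut C).Finite) :
    ↑(T.edgeBoundary hfin.toFinset) ⊆ C := by
  intro w hw
  obtain ⟨hw, hwF⟩ := Finset.mem_sdiff.1 hw
  obtain ⟨v, hv, hwv⟩ := Finset.mem_biUnion.1 hw
  rw [Set.Finite.mem_toFinset] at hv hwF
  obtain ⟨k, hk⟩ : ∃ k, T.parent^[k] w ∈ C := by simpa [insideCut] using hwF
  cases k with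
  | zero => exact hk
  | succ k =>
    rw [Function.iterate_succ_apply, ((T.mem_children).1 hwv).1] at hk
    exact absurd hk (hv k)

theorem strength_le_cutsetSum {θ κ : T.V → ℝ≥0} (hθ : T.IsFlow θ) (hκ : T.Respects θ κ)
    {C : Set T.V} (hC : T.IsCutset C) : (T.strength θ : ℝ≥0∞) ≤ T.cutsetSum κ C := by
  have hfin := T.finite_insideCut hC
  have hroot : T.root ∈ hfin.toFinset := by
    rw [hfin.mem_toFinset]
    intro k
    rw [Function.iterate_fixed T.parent_root]
    exact hC.1
  have hclosed : ∀ v ∈ hfin.toFinset, T.parent v ∈ hfin.toFinset := by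
    simp only [hfin.mem_toFinset]
    intro v hv k
    rw [← Function.iterate_succ_apply]
    exact hv (k + 1)
  calc (T.strength θ : ℝ≥0∞) = ∑ w ∈ T.edgeBoundary hfin.toFinset, (θ w : ℝ≥0∞) := by
        rw [T.strength_eq_sum_edgeBoundary hθ hroot hclosed, ENNReal.ofNNReal_finsetSum]
    _ ≤ ∑ w ∈ T.edgeBoundary hfin.toFinset, (κ w : ℝ≥0∞) := by
        gcongr with w hw
        exact hκ w (T.ne_root_of_mem_edgeBoundary hw)
    _ = T.cutsetSum κ ↑(T.edgeBoundary hfin.toFinset) := (T.cutsetSum_coe_finset κ _).symm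
    _ ≤ T.cutsetSum κ C := T.cutsetSum_mono κ (T.edgeBoundary_insideCut_subset hfin)

section PropFlow

variable (f : T.V → ℝ≥0)

noncomputable def propFlow (v : T.V) : ℝ≥0 :=
  if v = T.root then ∑ w ∈ T.children T.root, f w
  else f v * (propFlow (T.parent v) / ∑ u ∈ T.children (T.parent v), f u)
termination_by T.depth v
decreasing_by exact T.depth_parent_lt ‹_›

lemma propFlow_root : T.propFlow f T.root = ∑ w ∈ T.children T.root, f w := by
  rw [propFlow, if_pos rfl]

lemma propFlow_of_ne_root {v : T.V} (hv : v ≠ T.root) :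
    T.propFlow f v = f v * (T.propFlow f (T.parent v) / ∑ u ∈ T.children (T.parent v), f u) := by
  rw [propFlow, if_neg hv]

variable {f}

lemma propFlow_le_of_parent {v : T.V} (hv : v ≠ T.root)
    (hparent : T.propFlow f (T.parent v) ≤ ∑ u ∈ T.children (T.parent v), f u) :
    T.propFlow f v ≤ f v := by
  rw [T.propFlow_of_ne_root f hv]
  exact mul_le_of_le_one_right' (div_le_one_of_le₀ hparent zero_le)

lemma propFlow_le_sum_children (hf : ∀ v, f v ≤ ∑ w ∈ T.children v, f w) (v : T.V) :
    T.propFlow f v ≤ ∑ w ∈ T.children v, f w := by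
  by_cases hv : v = T.root
  · rw [hv, propFlow_root]
  · exact (T.propFlow_le_of_parent hv (propFlow_le_sum_children hf (T.parent v))).trans (hf v)
termination_by T.depth v
decreasing_by exact T.depth_parent_lt hv

lemma propFlow_le (hf : ∀ v, f v ≤ ∑ w ∈ T.children v, f w) {v : T.V} (hv : v ≠ T.root) :
    T.propFlow f v ≤ f v :=
  T.propFlow_le_of_parent hv (T.propFlow_le_sum_children hf _)

lemma isFlow_propFlow (hf : ∀ v, f v ≤ ∑ w ∈ T.children v, f w) : T.IsFlow (T.propFlow f) := by
  intro v
  have hchild : ∀ w ∈ T.children v,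
      T.propFlow f w = f w * (T.propFlow f v / ∑ u ∈ T.children v, f u) := by
    intro w hw
    obtain ⟨hwv, hw⟩ := (T.mem_children).1 hw
    rw [T.propFlow_of_ne_root f hw, hwv]
  rw [Finset.sum_congr rfl hchild, ← Finset.sum_mul]
  rcases eq_or_ne (∑ u ∈ T.children v, f u) 0 with hD | hD
  · rw [hD, div_zero, mul_zero]
    exact nonpos_iff_eq_zero.1 (hD ▸ T.propFlow_le_sum_children hf v)
  · rw [mul_div_cancel₀ _ hD]

end PropFlow

variable (κ : T.V → ℝ≥0)

/-- The least capacity of a cut separating `v` from the `k`-th generation below it. -/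
noncomputable def truncCutCap : ℕ → T.V → ℝ≥0
  | 0, v => κ v
  | k + 1, v => min (κ v) (∑ w ∈ T.children v, truncCutCap k w)

noncomputable def truncCut : ℕ → T.V → Set T.V
  | 0, v => {v}
  | k + 1, v =>
    if κ v ≤ ∑ w ∈ T.children v, T.truncCutCap κ k w then {v}
    else ⋃ w ∈ T.children v, truncCut k w

lemma cutsetSum_truncCut_le :
    ∀ k v, T.cutsetSum κ (T.truncCut κ k v) ≤ T.truncCutCap κ k v
  | 0, v => (T.cutsetSum_singleton κ v).le
  | k + 1, v => by
    by_cases h : κ v ≤ ∑ w ∈ T.children v, T.truncCutCap κ k w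
    · rw [truncCut, if_pos h, cutsetSum_singleton, truncCutCap, min_eq_left h]
    · rw [truncCut, if_neg h, truncCutCap, min_eq_right (not_le.1 h).le,
        ENNReal.ofNNReal_finsetSum]
      calc T.cutsetSum κ (⋃ w ∈ T.children v, T.truncCut κ k w)
          ≤ ∑ w ∈ T.children v, T.cutsetSum κ (T.truncCut κ k w) := T.cutsetSum_biUnion_le κ _ _
        _ ≤ ∑ w ∈ T.children v, (T.truncCutCap κ k w : ℝ≥0∞) :=
            Finset.sum_le_sum fun w _ => cutsetSum_truncCut_le k w

lemma ne_root_of_mem_truncCut {k : ℕ} {v x : T.V} (hv : v ≠ T.root)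
    (hx : x ∈ T.truncCut κ k v) : x ≠ T.root := by
  induction k generalizing v with
  | zero =>
    obtain rfl : x = v := hx
    exact hv
  | succ k ih =>
    rw [truncCut] at hx
    split_ifs at hx
    · rwa [Set.mem_singleton_iff.1 hx]
    · obtain ⟨w, hw, hxw⟩ := Set.mem_iUnion₂.1 hx
      exact ih (T.ne_root_of_mem_children hw) hxw

lemma exists_mem_truncCut {r : ℕ → T.V} (hr : T.IsRay r) (k i : ℕ) :
    ∃ m, r (m + 1) ∈ T.truncCut κ k (r (i + 1)) := by
  induction k generalizing i with
  | zero => exact ⟨i, Set.mem_singleton _⟩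
  | succ k ih =>
    rw [truncCut]
    split_ifs
    · exact ⟨i, Set.mem_singleton _⟩
    · obtain ⟨m, hm⟩ := ih (i + 1)
      exact ⟨m, Set.mem_iUnion₂.2 ⟨r (i + 2), (T.mem_children).2 (hr.2 (i + 1)), hm⟩⟩

-- `truncCut κ k T.root` may be `{T.root}`, which is not a cutset.
def rootCut (k : ℕ) : Set T.V := ⋃ w ∈ T.children T.root, T.truncCut κ k w

lemma isCutset_rootCut (k : ℕ) : T.IsCutset (T.rootCut κ k) := by
  refine ⟨fun h => ?_, fun r hr => ?_⟩
  · obtain ⟨w, hw, hroot⟩ := Set.mem_iUnion₂.1 h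
    exact T.ne_root_of_mem_truncCut κ (T.ne_root_of_mem_children hw) hroot rfl
  · obtain ⟨m, hm⟩ := T.exists_mem_truncCut κ hr k 0
    refine ⟨m, Set.mem_iUnion₂.2 ⟨r 1, (T.mem_children).2 ?_, hm⟩⟩
    simpa [hr.1] using hr.2 0

lemma cutsetSum_rootCut_le (k : ℕ) :
    T.cutsetSum κ (T.rootCut κ k) ≤ ∑ w ∈ T.children T.root, (T.truncCutCap κ k w : ℝ≥0∞) :=
  (T.cutsetSum_biUnion_le κ _ _).trans
    (Finset.sum_le_sum fun w _ => T.cutsetSum_truncCut_le κ k w)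

lemma truncCutCap_succ_le : ∀ k v, T.truncCutCap κ (k + 1) v ≤ T.truncCutCap κ k v
  | 0, _ => min_le_left _ _
  | k + 1, _ => min_le_min le_rfl (Finset.sum_le_sum fun w _ => truncCutCap_succ_le k w)

noncomputable def cutCap (v : T.V) : ℝ≥0 := ⨅ k, T.truncCutCap κ k v

lemma cutCap_le (v : T.V) : T.cutCap κ v ≤ κ v :=
  ciInf_le (OrderBot.bddBelow _) 0

lemma tendsto_truncCutCap (v : T.V) :
    Tendsto (T.truncCutCap κ · v) atTop (𝓝 (T.cutCap κ v)) :=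
  tendsto_atTop_ciInf (antitone_nat_of_succ_le fun k => T.truncCutCap_succ_le κ k v)
    (OrderBot.bddBelow _)

lemma cutCap_eq_min (v : T.V) :
    T.cutCap κ v = min (κ v) (∑ w ∈ T.children v, T.cutCap κ w) :=
  tendsto_nhds_unique ((T.tendsto_truncCutCap κ v).comp (tendsto_add_atTop_nat 1))
    (tendsto_const_nhds.min (tendsto_finsetSum _ fun w _ => T.tendsto_truncCutCap κ w))

lemma cutCap_le_sum_children (v : T.V) : T.cutCap κ v ≤ ∑ w ∈ T.children v, T.cutCap κ w :=
  (T.cutCap_eq_min κ v).trans_le (min_le_right _ _)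

lemma iInf_cutsetSum_le_sum_cutCap :
    ⨅ (C : Set T.V) (_ : T.IsCutset C), T.cutsetSum κ C ≤
      ∑ w ∈ T.children T.root, (T.cutCap κ w : ℝ≥0∞) :=
  ge_of_tendsto' (tendsto_finsetSum _ fun w _ => ENNReal.tendsto_coe.2 (T.tendsto_truncCutCap κ w))
    fun k => (iInf₂_le _ (T.isCutset_rootCut κ k)).trans (T.cutsetSum_rootCut_le κ k)

end GrowingTree

/-- The enhanced Max-Flow Min-Cut theorem on a locally finite rooted tree: the maximal flow
from the root to infinity equals the infimum of the total capacities of cutsets separating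
the root from infinity. -/
theorem maxFlow_eq_iInf_cutsetSum (T : GrowingTree) (κ : T.V → ℝ≥0) :
    T.maxFlow κ = ⨅ (C : Set T.V) (_ : T.IsCutset C), T.cutsetSum κ C := by
  refine le_antisymm
    (iSup_le fun θ => le_iInf₂ fun C hC => T.strength_le_cutsetSum θ.2.1 θ.2.2 hC) ?_
  have hcut := T.cutCap_le_sum_children κ
  have hresp : T.Respects (T.propFlow (T.cutCap κ)) κ := fun v hv =>
    (T.propFlow_le hcut hv).trans (T.cutCap_le κ v)
  calc ⨅ (C : Set T.V) (_ : T.IsCutset C), T.cutsetSum κ C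
      ≤ ∑ w ∈ T.children T.root, (T.cutCap κ w : ℝ≥0∞) := T.iInf_cutsetSum_le_sum_cutCap κ
    _ = T.strength (T.propFlow (T.cutCap κ)) := by
      rw [GrowingTree.strength, GrowingTree.propFlow_root, ENNReal.ofNNReal_finsetSum]
    _ ≤ T.maxFlow κ := le_iSup_of_le ⟨_, T.isFlow_propFlow hcut, hresp⟩ le_rfl
end
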